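/- If n \ge 9 is an odd composite integer, then for every divisor d \ge 3 of n one has S_{n-1} \equiv S_{d-1} \pmod{d}. -/

import Mathlib

/-!
From `D (m + 1) = (m + 1) D m - (-1)^m`, where the factor `m + 1` only matters modulo `d`,
one gets `D (d + j) ≡ (-1)^d D j (mod d)`. Hence `D` is periodic modulo `d` with period `2d`,
and `n - 1 = (d - 1) + d (q - 1)` with `n = d q` and `q - 1` even.
-/

theorem numDerangements_modEq_neg_one_pow (d : ℕ) :
    (numDerangements d : ℤ) ≡ (-1) ^ d [ZMOD d] := by
  cases d with
  | zero => simp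
  | succ e =>
    refine Int.modEq_iff_dvd.mpr ⟨-numDerangements e, ?_⟩
    rw [numDerangements_succ]
    push_cast
    ring

theorem numDerangements_add_modEq (d j : ℕ) :
    (numDerangements (d + j) : ℤ) ≡ (-1) ^ d * numDerangements j [ZMOD d] := by
  induction j with
  | zero => simpa using numDerangements_modEq_neg_one_pow d
  | succ j ih =>
    have hd : (d : ℤ) ≡ 0 [ZMOD d] := Int.modEq_zero_iff_dvd.mpr dvd_rfl
    calc (numDerangements (d + (j + 1)) : ℤ)
        = (d + (j + 1)) * numDerangements (d + j) - (-1) ^ d * (-1) ^ j := by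
          rw [← add_assoc, numDerangements_succ]; push_cast; ring
      _ ≡ (0 + (j + 1)) * ((-1) ^ d * numDerangements j) - (-1) ^ d * (-1) ^ j [ZMOD d] :=
          ((hd.add_right _).mul ih).sub_right _
      _ = (-1) ^ d * numDerangements (j + 1) := by
          rw [numDerangements_succ]; ring

theorem numDerangements_add_mul_modEq (d k j : ℕ) :
    (numDerangements (j + d * k) : ℤ) ≡ (-1) ^ (d * k) * numDerangements j [ZMOD d] := by
  induction k with
  | zero => simp
  | succ k ih =>
    calc (numDerangements (j + d * (k + 1)) : ℤ) = numDerangements (d + (j + d * k)) := by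
          congr 2; ring
      _ ≡ (-1) ^ d * numDerangements (j + d * k) [ZMOD d] := numDerangements_add_modEq d _
      _ ≡ (-1) ^ d * ((-1) ^ (d * k) * numDerangements j) [ZMOD d] := ih.mul_left _
      _ = (-1) ^ (d * (k + 1)) * numDerangements j := by ring

theorem derangement_mod_divisor_of_odd_composite_general (n d : ℕ) (hodd : Odd n)
    (hdvd : d ∣ n) :
    (numDerangements (n - 1) : ℤ) ≡ (numDerangements (d - 1) : ℤ) [ZMOD (d : ℤ)] := by
  obtain ⟨q, rfl⟩ := hdvd
  obtain ⟨hd, ⟨k, rfl⟩⟩ := Nat.odd_mul.mp hodd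
  have hsplit : d * (2 * k + 1) - 1 = (d - 1) + d * (2 * k) := by
    have := hd.pos
    rw [mul_add_one]
    omega
  rw [hsplit]
  have hsign : ((-1 : ℤ)) ^ (d * (2 * k)) = 1 := ((even_two_mul k).mul_left d).neg_one_pow
  simpa only [hsign, one_mul] using numDerangements_add_mul_modEq d (2 * k) (d - 1)

/-- If `n ≥ 9` is an odd composite integer, then for every divisor `d ≥ 3` of `n`,
`S_{n-1} ≡ S_{d-1} (mod d)`. -/
theorem derangement_mod_divisor_of_odd_composite (n d : ℕ) (hn : 9 ≤ n) (hodd : Odd n)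
    (hcomp : ¬ n.Prime) (hd : 3 ≤ d) (hdvd : d ∣ n) :
    (numDerangements (n - 1) : ℤ) ≡ (numDerangements (d - 1) : ℤ) [ZMOD (d : ℤ)] :=
  derangement_mod_divisor_of_odd_composite_general n d hodd hdvd
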